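/- Let {H_1, ..., H_t} be a complete Hall σ-set of a finite group G where each H_i is a σ_i-group, let H be a p-subgroup of G that is σ-semipermutable with respect to {H_1,...,H_t}, where p ∈ π(H_1) ⊆ σ_1. If R is a normal σ_1-subgroup of G, then the index |G : N_G(H ∩ R)| is a σ_1-number (divisible only by primes in σ_1). -/

import Mathlib

open Subgroup Pointwise

variable {G : Type*}

/-- The conjugate subgroup `K ^ x = x⁻¹ K x`. -/
def sconj [Group G] (x : G) (K : Subgroup G) : Subgroup G :=
  K.map (MulAut.conj x⁻¹).toMonoidHom

/-- Two subgroups permute if `AB = BA` as subsets. -/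
def permutes [Group G] (A B : Subgroup G) : Prop :=
  (A : Set G) * (B : Set G) = (B : Set G) * (A : Set G)

/-- `H/K` is a chief factor of `G`. -/
def IsChiefFactor [Group G] (K H : Subgroup G) : Prop :=
  K.Normal ∧ H.Normal ∧ K < H ∧ ∀ N : Subgroup G, N.Normal → K < N → N ≤ H → N = H

/-- The factor `H/K` is cyclic (generated by a single coset). -/
def CyclicFactor [Group G] (K H : Subgroup G) : Prop :=
  ∃ g ∈ H, ∀ h ∈ H, ∃ n : ℤ, (g ^ n)⁻¹ * h ∈ K

/-- A group is `p`-soluble if every chief factor is a `p`-group or a `p'`-group. -/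
def pSoluble (p : ℕ) (X : Type*) [Group X] : Prop :=
  ∀ K H : Subgroup X, IsChiefFactor K H →
    (∃ n : ℕ, (K.subgroupOf H).index = p ^ n) ∨ ¬ p ∣ (K.subgroupOf H).index

/-- `p`-supersoluble: `p`-soluble and chief factors of order divisible by `p` have order `p`. -/
def pSupersoluble (p : ℕ) (X : Type*) [Group X] : Prop :=
  pSoluble p X ∧ ∀ K H : Subgroup X, IsChiefFactor K H →
    p ∣ (K.subgroupOf H).index → (K.subgroupOf H).index = p

/-- A Hall `s`-subgroup: its order involves only primes in `s`, its index none. -/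
def IsHallSigmaSubgroup {X : Type*} [Group X] (s : Set ℕ) (H : Subgroup X) : Prop :=
  (∀ q : ℕ, q.Prime → q ∣ Nat.card H → q ∈ s) ∧
    ∀ q : ℕ, q.Prime → q ∣ H.index → q ∉ s

/-- `σ` is a partition of the set of all primes. -/
def IsPrimePartition {ι : Type*} (σ : ι → Set ℕ) : Prop :=
  (∀ i, ∀ q ∈ σ i, Nat.Prime q) ∧ ∀ q : ℕ, q.Prime → ∃! i, q ∈ σ i

/-- `ℋ` (with labelling `j`) is a complete Hall `σ`-set. -/
def IsCompleteHallSigmaSet {X : Type*} [Group X] {ι : Type*} (σ : ι → Set ℕ)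
    {t : ℕ} (ℋ : Fin t → Subgroup X) (j : Fin t → ι) : Prop :=
  Function.Injective j ∧ (∀ i, IsHallSigmaSubgroup (σ (j i)) (ℋ i)) ∧
    ∀ a : ι, (∃ q : ℕ, q.Prime ∧ q ∈ σ a ∧ q ∣ Nat.card X) → ∃ i, j i = a

/-- `H` is σ-semipermutable with respect to `ℋ`. -/
def SigmaSemipermutable {X : Type*} [Group X] {t : ℕ} (H : Subgroup X)
    (ℋ : Fin t → Subgroup X) : Prop :=
  ∀ i : Fin t, Nat.Coprime (Nat.card H) (Nat.card (ℋ i)) →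
    ∀ x : X, permutes H (sconj x (ℋ i))

/-- `E/O ≤ Z_∞(G/O)`: there is an ascending chain from `O` which is central over `O`
and covers `E`. -/
def LeHypercenterOver [Group G] (O E : Subgroup G) : Prop :=
  ∃ n : ℕ, ∃ Z : ℕ → Subgroup G, Z 0 = O ∧ E ≤ Z n ∧
    ∀ i < n, Z i ≤ Z (i + 1) ∧ ∀ z ∈ Z (i + 1), ∀ g : G, z * g * z⁻¹ * g⁻¹ ∈ Z i

/-- `p`-nilpotent: has a normal `p`-complement. -/
def pNilpotent (p : ℕ) (X : Type*) [Group X] : Prop :=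
  ∃ N : Subgroup X, N.Normal ∧ ¬ p ∣ Nat.card N ∧
    ∀ q : ℕ, q.Prime → q ∣ N.index → q = p

/-- `O_{p'}(E)`, the largest normal `p'`-subgroup of `E`, as a subgroup of `G`. -/
def OpPrime (p : ℕ) [Group G] (E : Subgroup G) : Subgroup G :=
  ⨆ N ∈ {N : Subgroup G | N ≤ E ∧ (N.subgroupOf E).Normal ∧ ¬ p ∣ Nat.card N}, N

/-- `O_π(X)`, the largest normal `π`-subgroup. -/
def Oset (π : Set ℕ) (X : Type*) [Group X] : Subgroup X :=
  ⨆ N ∈ {N : Subgroup X | N.Normal ∧ ∀ q : ℕ, q.Prime → q ∣ Nat.card N → q ∈ π}, N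

/-- The Fitting subgroup: join of all normal nilpotent subgroups. -/
def FittingSub (X : Type*) [Group X] : Subgroup X :=
  ⨆ N ∈ {N : Subgroup X | N.Normal ∧ Group.IsNilpotent N}, N

/-- `G/C` is strictly `p`-closed (stated internally in `G`, over the subgroup `C`). -/
def StrictlyPClosedOver [Group G] (p : ℕ) (C : Subgroup G) : Prop :=
  ∃ S : Subgroup G, C ≤ S ∧ S.Normal ∧ (∀ s ∈ S, ∃ n : ℕ, s ^ p ^ n ∈ C) ∧
    ¬ p ∣ S.index ∧ (∀ a b : G, a * b * a⁻¹ * b⁻¹ ∈ S) ∧ ∀ a : G, a ^ (p - 1) ∈ S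


/-!
For `i ≠ i1` the Hall subgroup `ℋ i` has order prime to `p` and to `|R|`, and it permutes with
`H`, so `K = H ℋ i` is a subgroup in which `H` has index `|ℋ i|`. The normal subgroup `K ∩ R`
of `K` has order dividing `|H| |ℋ i|` and prime to `|ℋ i|`, so it is a `p`-group; being normal
in `K`, it lies in the `p`-subgroup `H` of `p'`-index. Hence `K ∩ R = H ∩ R` is normalized by
`ℋ i`, and `N_G(H ∩ R)` contains every Hall subgroup `ℋ i` with `i ≠ i1`.
-/

namespace Subgroup

variable [Group G] {H A : Subgroup G}

lemma coe_sup_of_permutes (h : permutes H A) : ((H ⊔ A : Subgroup G) : Set G) = H * A := by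
  let S : Subgroup G :=
    { carrier := H * A
      one_mem' := ⟨1, H.one_mem, 1, A.one_mem, one_mul 1⟩
      mul_mem' := by
        rintro _ _ hx hy
        have hclosed : (H : Set G) * A * (H * A) = H * A := by
          calc (H : Set G) * A * (H * A) = H * (A * H) * A := by simp only [mul_assoc]
            _ = H * H * (A * A) := by rw [← h]; simp only [mul_assoc]
            _ = H * A := by rw [coe_mul_coe, coe_mul_coe]
        exact hclosed ▸ Set.mul_mem_mul hx hy
      inv_mem' := by
        rintro _ ⟨a, ha, b, hb, rfl⟩
        rw [mul_inv_rev]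
        show b⁻¹ * a⁻¹ ∈ (H : Set G) * A
        rw [h]
        exact Set.mul_mem_mul (A.inv_mem hb) (H.inv_mem ha) }
  have hS : H ⊔ A = S := le_antisymm
    (sup_le (fun x hx => ⟨x, hx, 1, A.one_mem, mul_one x⟩)
      (fun x hx => ⟨1, H.one_mem, x, hx, one_mul x⟩))
    (fun _ ⟨_, hx, _, hy, he⟩ => he ▸ mul_mem_sup hx hy)
  rw [hS]
  rfl

lemma isComplement'_subgroupOf_sup (h : permutes H A) (hd : Disjoint H A) :
    IsComplement' (H.subgroupOf (H ⊔ A)) (A.subgroupOf (H ⊔ A)) := by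
  refine isComplement'_of_disjoint_and_mul_eq_univ ?_ ?_
  · rw [disjoint_def] at hd ⊢
    exact fun hx hy => Subtype.ext (hd hx hy)
  · refine Set.eq_univ_of_forall fun x => ?_
    obtain ⟨a, ha, b, hb, hab⟩ := (coe_sup_of_permutes h).le x.2
    exact ⟨⟨a, mem_sup_left ha⟩, ha, ⟨b, mem_sup_right hb⟩, hb, Subtype.ext hab⟩

end Subgroup

namespace IsPGroup

variable {p : ℕ} [Fact p.Prime]

lemma coprime_card_of_not_dvd {Q : Type*} [Group Q] [Finite Q] (hQ : IsPGroup p Q) {n : ℕ}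
    (hn : ¬ p ∣ n) : Nat.Coprime (Nat.card Q) n := by
  obtain ⟨k, hk⟩ := hQ.exists_card_eq
  rw [hk]
  exact ((Nat.Prime.coprime_iff_not_dvd Fact.out).2 hn).pow_left k

variable [Group G] [Finite G]

lemma le_of_not_dvd_relIndex {H N K : Subgroup G} (hH : IsPGroup p H) (hN : IsPGroup p N)
    (hHN : H ≤ normalizer (N : Set G)) (hHK : H ≤ K) (hNK : N ≤ K)
    (hindex : ¬ p ∣ H.relIndex K) : N ≤ H := by
  have hcop := (hH.to_sup_of_normal_right' hN hHN).coprime_card_of_not_dvd hindex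
  have hone : H.relIndex (H ⊔ N) = 1 := Nat.eq_one_of_dvd_coprimes hcop (relIndex_dvd_card _ _)
    ⟨_, (relIndex_mul_relIndex H _ K le_sup_left (sup_le hHK hNK)).symm⟩
  exact le_sup_right.trans (relIndex_eq_one.1 hone)

lemma le_normalizer_inf_of_permutes {H A R : Subgroup G} (hH : IsPGroup p H)
    (hpA : ¬ p ∣ Nat.card A) (hHA : permutes H A) [R.Normal]
    (hRA : Nat.Coprime (Nat.card R) (Nat.card A)) :
    A ≤ normalizer ((H ⊓ R : Subgroup G) : Set G) := by
  set K := H ⊔ A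
  have hc := isComplement'_subgroupOf_sup hHA
    (disjoint_of_coprime_natCard (hH.coprime_card_of_not_dvd hpA))
  have hcardH : Nat.card (H.subgroupOf K) = Nat.card H :=
    Nat.card_congr (subgroupOfEquivOfLe le_sup_left).toEquiv
  have hcardA : Nat.card (A.subgroupOf K) = Nat.card A :=
    Nat.card_congr (subgroupOfEquivOfLe le_sup_right).toEquiv
  have hcardK : Nat.card K = Nat.card H * Nat.card A := by
    rw [← hcardH, ← hcardA, hc.card_mul_card]
  have hKR : IsPGroup p (K ⊓ R : Subgroup G) := by
    obtain ⟨k, hk⟩ := hH.exists_card_eq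
    have hdvd : Nat.card (K ⊓ R : Subgroup G) ∣ p ^ k :=
      hk ▸ (Nat.Coprime.coprime_dvd_left (card_dvd_of_le inf_le_right) hRA).dvd_of_dvd_mul_right
        (hcardK ▸ card_dvd_of_le inf_le_left)
    obtain ⟨m, -, hm⟩ := (Nat.dvd_prime_pow Fact.out).1 hdvd
    exact IsPGroup.of_card hm
  have hnorm : K ≤ normalizer ((K ⊓ R : Subgroup G) : Set G) :=
    (le_inf le_normalizer (normalizer_eq_top (H := R) ▸ le_top)).trans
      inf_normalizer_le_normalizer_inf
  have hle : K ⊓ R ≤ H := hH.le_of_not_dvd_relIndex hKR (le_sup_left.trans hnorm) le_sup_left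
    inf_le_left (by rwa [relIndex, hc.symm.index_eq_card, hcardA])
  have heq : K ⊓ R = H ⊓ R := le_antisymm (le_inf hle inf_le_right) (inf_le_inf_right R le_sup_left)
  exact heq ▸ le_sup_right.trans hnorm

end IsPGroup

lemma IsPrimePartition.eq_of_mem {ι : Type*} {σ : ι → Set ℕ} (hσ : IsPrimePartition σ)
    {q : ℕ} (hq : q.Prime) {a b : ι} (ha : q ∈ σ a) (hb : q ∈ σ b) : a = b :=
  (hσ.2 q hq).unique ha hb

lemma IsCompleteHallSigmaSet.not_dvd_card_of_ne [Group G] {ι : Type*} {σ : ι → Set ℕ}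
    (hσ : IsPrimePartition σ) {t : ℕ} {ℋ : Fin t → Subgroup G} {j : Fin t → ι}
    (hℋ : IsCompleteHallSigmaSet σ ℋ j) {i i' : Fin t} (hne : i ≠ i') {q : ℕ} (hq : q.Prime)
    (hqi' : q ∈ σ (j i')) : ¬ q ∣ Nat.card (ℋ i) :=
  fun hdvd => hne (hℋ.1 (hσ.eq_of_mem hq ((hℋ.2.1 i).1 q hq hdvd) hqi'))

lemma sconj_one [Group G] (K : Subgroup G) : sconj (1 : G) K = K := by
  ext g
  simp [sconj, Subgroup.mem_map, MulAut.conj]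

theorem stmt13_general {ι : Type*} [Group G] [Finite G] (p : ℕ) (hp : p.Prime)
    (σ : ι → Set ℕ) (hσ : IsPrimePartition σ)
    {t : ℕ} (ℋ : Fin t → Subgroup G) (j : Fin t → ι)
    (hH : IsCompleteHallSigmaSet σ ℋ j)
    (H : Subgroup G) (hHp : IsPGroup p H)
    (hs : SigmaSemipermutable H ℋ)
    (i1 : Fin t) (hp1 : p ∈ σ (j i1))
    (R : Subgroup G) (hRn : R.Normal)
    (hR : ∀ q : ℕ, q.Prime → q ∣ Nat.card R → q ∈ σ (j i1)) :
    ∀ q : ℕ, q.Prime → q ∣ (Subgroup.normalizer ((H ⊓ R : Subgroup G) : Set G)).index → q ∈ σ (j i1) := by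
  have : Fact p.Prime := ⟨hp⟩
  have hnorm : ∀ i, i ≠ i1 → ℋ i ≤ Subgroup.normalizer ((H ⊓ R : Subgroup G) : Set G) := by
    intro i hne
    have hpA := hH.not_dvd_card_of_ne hσ hne hp hp1
    refine hHp.le_normalizer_inf_of_permutes hpA
      (sconj_one (ℋ i) ▸ hs i (hHp.coprime_card_of_not_dvd hpA) 1) ?_
    exact Nat.coprime_of_dvd fun q hq hqR => hH.not_dvd_card_of_ne hσ hne hq (hR q hq hqR)
  intro q hq hqdvd
  by_contra hq1
  obtain ⟨a, hqa, -⟩ := hσ.2 q hq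
  obtain ⟨i, rfl⟩ := hH.2.2 a ⟨q, hq, hqa, hqdvd.trans (Subgroup.index_dvd_card _)⟩
  have hne : i ≠ i1 := by rintro rfl; exact hq1 hqa
  exact (hH.2.1 i).2 q hq (hqdvd.trans (Subgroup.index_dvd_of_le (hnorm i hne))) hqa

/-- Let `{H_1,...,H_t}` be a complete Hall σ-set of `G`, `H` a
σ-semipermutable `p`-subgroup with `p ∈ π(H_{i₁}) ⊆ σ_{j i₁}`, and `R` a normal
`σ_{j i₁}`-subgroup of `G`. Then `|G : N_G(H ⊓ R)|` is a `σ_{j i₁}`-number. -/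
theorem stmt13 {ι : Type*} [Group G] [Finite G] (p : ℕ) (hp : p.Prime)
    (σ : ι → Set ℕ) (hσ : IsPrimePartition σ)
    {t : ℕ} (ℋ : Fin t → Subgroup G) (j : Fin t → ι)
    (hH : IsCompleteHallSigmaSet σ ℋ j)
    (H : Subgroup G) (hHp : IsPGroup p H)
    (hs : SigmaSemipermutable H ℋ)
    (i1 : Fin t) (hp1 : p ∈ σ (j i1)) (hdvd : p ∣ Nat.card (ℋ i1))
    (R : Subgroup G) (hRn : R.Normal)
    (hR : ∀ q : ℕ, q.Prime → q ∣ Nat.card R → q ∈ σ (j i1)) :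
    ∀ q : ℕ, q.Prime → q ∣ (Subgroup.normalizer ((H ⊓ R : Subgroup G) : Set G)).index → q ∈ σ (j i1) :=
  stmt13_general p hp σ hσ ℋ j hH H hHp hs i1 hp1 R hRn hR
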